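/- Let ρ > 1. For all sufficiently large d, for all y'', z'' ∈ ℝ^{d-2} with (1+ρ) - 7/d ≤ ‖y''‖ ≤ (1+ρ) - 6/d, √2(1+ρ) - 7/d ≤ ‖z''‖ ≤ √2(1+ρ) - 6/d, and ⟨z'', y''⟩ ≥ ‖y''‖·‖z''‖·(√2/2), and for all y', z' ∈ ℝ² with ‖z' - y'‖² ≤ 2/d, one has ‖z'-y'‖² + ‖z''-y''‖² < (1+ρ)². -/

import Mathlib

open Filter

lemma norm_sub_sq_le_of_inner_ge {E : Type*} [NormedAddCommGroup E] [InnerProductSpace ℝ E]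
    {y z : E} {a b A B c : ℝ} (ha : 0 ≤ a) (hA : 0 ≤ A) (hc : 0 ≤ c)
    (hya : a ≤ ‖y‖) (hyb : ‖y‖ ≤ b) (hzA : A ≤ ‖z‖) (hzB : ‖z‖ ≤ B)
    (hinner : ‖y‖ * ‖z‖ * c ≤ inner ℝ z y) :
    ‖z - y‖ ^ 2 ≤ b ^ 2 + B ^ 2 - 2 * c * (a * A) := by
  have hprod : a * A ≤ ‖y‖ * ‖z‖ := mul_le_mul hya hzA hA (ha.trans hya)
  have hy2 : ‖y‖ ^ 2 ≤ b ^ 2 := pow_le_pow_left₀ (norm_nonneg _) hyb 2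
  have hz2 : ‖z‖ ^ 2 ≤ B ^ 2 := pow_le_pow_left₀ (norm_nonneg _) hzB 2
  rw [norm_sub_sq_real]
  nlinarith [mul_le_mul_of_nonneg_right hprod hc]

lemma cone_annulus_bound_lt {r d : ℝ} (hr : 1 ≤ r) (hd : 10 ≤ d) :
    2 / d + (r - 6 / d) ^ 2 + (√2 * r - 6 / d) ^ 2 - √2 * (r - 7 / d) * (√2 * r - 7 / d)
      < r ^ 2 := by
  set u := 1 / d with hu_def
  have hu : 0 < u := by positivity
  have hu10 : u ≤ 1 / 10 := one_div_le_one_div_of_le (by norm_num) hd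
  have hs2 : √2 ^ 2 = 2 := Real.sq_sqrt (by norm_num)
  have hs : (1.4 : ℝ) ≤ √2 := by nlinarith [Real.sqrt_nonneg 2]
  -- since `√2 ^ 2 = 2`, the terms of order zero in `u` cancel against `r ^ 2`
  have hexpand : 2 / d + (r - 6 / d) ^ 2 + (√2 * r - 6 / d) ^ 2
      - √2 * (r - 7 / d) * (√2 * r - 7 / d)
      = r ^ 2 + u * (2 + (2 - 5 * √2) * r + (72 - 49 * √2) * u) := by
    rw [div_eq_mul_one_div 2 d, div_eq_mul_one_div 6 d, div_eq_mul_one_div 7 d, ← hu_def]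
    linear_combination 7 * r * u * hs2
  have hfactor : 2 + (2 - 5 * √2) * r + (72 - 49 * √2) * u < 0 := by nlinarith
  rw [hexpand]
  linarith [mul_neg_of_pos_of_neg hu hfactor]

theorem cone_annulus_dist_lt (ρ : ℝ) (hρ : 1 < ρ) :
    ∀ᶠ d : ℕ in atTop,
      ∀ y'' z'' : EuclideanSpace ℝ (Fin (d - 2)),
        (1 + ρ) - 7 / (d : ℝ) ≤ ‖y''‖ → ‖y''‖ ≤ (1 + ρ) - 6 / (d : ℝ) →
        Real.sqrt 2 * (1 + ρ) - 7 / (d : ℝ) ≤ ‖z''‖ →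
        ‖z''‖ ≤ Real.sqrt 2 * (1 + ρ) - 6 / (d : ℝ) →
        (inner ℝ z'' y'' : ℝ) ≥ ‖y''‖ * ‖z''‖ * (Real.sqrt 2 / 2) →
        ∀ y' z' : EuclideanSpace ℝ (Fin 2), ‖z' - y'‖ ^ 2 ≤ 2 / (d : ℝ) →
          ‖z' - y'‖ ^ 2 + ‖z'' - y''‖ ^ 2 < (1 + ρ) ^ 2 := by
  filter_upwards [eventually_ge_atTop 10] with d hd
  intro y'' z'' hy₁ hy₂ hz₁ hz₂ hinner y' z' hy'z'
  have hd10 : (10 : ℝ) ≤ d := by exact_mod_cast hd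
  have h7d : 7 / (d : ℝ) ≤ 1 := by rw [div_le_one (by positivity)]; linarith
  have hy₀ : 0 ≤ (1 + ρ) - 7 / (d : ℝ) := by linarith
  have hz₀ : 0 ≤ √2 * (1 + ρ) - 7 / (d : ℝ) := by
    nlinarith [Real.one_lt_sqrt_two]
  have hdist := norm_sub_sq_le_of_inner_ge hy₀ hz₀ (by positivity) hy₁ hy₂ hz₁ hz₂ hinner
  have hbound := cone_annulus_bound_lt (r := 1 + ρ) (by linarith) hd10
  linarith
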